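/- arXiv:2211.03385 — 2 statements merged into one kernel-verified Lean document; each statement's English description precedes it below -/
import Mathlib

section
/- Under (H1), there exists n_0 ≥ 1 such that for all n > n_0 the companion matrix A_n is diagonalizable over ℂ, A_n = P_n D_n P_n^{−1}, where D_n = diag(λ_{n,1},…,λ_{n,p}) contains p distinct eigenvalues ordered so that 1 > |λ_{n,1}| ≥ … ≥ |λ_{n,p}| > 0, P_n is the matrix with (i,j)-entry λ_{n,j}^{−(i−1)}, and moreover ‖P_n‖ and ‖P_n^{−1}‖ are bounded by a constant independent of n. -/
open MeasureTheory ProbabilityTheory Filter Matrix Polynomial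
open scoped BigOperators Topology NNReal Kronecker

/-- The `p × p` companion matrix whose first row is `θ`, with subdiagonal entries `1`
and remaining entries `0`. -/
noncomputable def companion (p : ℕ) (θ : Fin p → ℝ) : Matrix (Fin p) (Fin p) ℝ :=
  Matrix.of fun i j => if (i : ℕ) = 0 then θ j else if (i : ℕ) = (j : ℕ) + 1 then 1 else 0

/-- Spectral radius of a real matrix: the largest modulus of its complex eigenvalues. -/
noncomputable def specRad {p : ℕ} (A : Matrix (Fin p) (Fin p) ℝ) : ℝ :=
  sSup ((fun z : ℂ => ‖z‖) '' spectrum ℂ (A.map Complex.ofReal))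

/-- Frobenius norm of a complex matrix. -/
noncomputable def frobC {p q : ℕ} (M : Matrix (Fin p) (Fin q) ℂ) : ℝ :=
  Real.sqrt (∑ i, ∑ j, Complex.normSq (M i j))

/-- The Vandermonde-type eigenvector matrix with `(i,j)` entry `λ_j^{-(i-1)}`. -/
noncomputable def Pmat {p : ℕ} (lam : Fin p → ℂ) : Matrix (Fin p) (Fin p) ℂ :=
  Matrix.of fun i j => lam j ^ (-((i : ℕ) : ℤ))

/-!
The characteristic polynomials `χₙ` of `Aₙ` converge to that of `A`, whose roots are the `p`
distinct numbers `λᵢ`. Since `|χₙ(λᵢ)|` is the product of the distances from `λᵢ` to the roots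
of `χₙ`, for large `n` some root of `χₙ` lies within `δ` of each `λᵢ`, where `3δ` is below the
gaps between the `λᵢ` and `2δ` below their moduli. These `p` roots are `δ`-separated, so they
are all the eigenvalues of `Aₙ`. A companion matrix with eigenvalue `μ ≠ 0` has the
eigenvector `(μ^{-k})ₖ`, so distinct eigenvalues diagonalize `Aₙ` through the Vandermonde
matrix `Pₙ`. Finally the eigenvalue tuples of all `Aₙ` lie in the compact set of
`δ`-separated tuples with moduli in `[δ, 1]`, on which `P` and `P⁻¹` are continuous.
-/

namespace Polynomial

theorem exists_mem_roots_norm_sub_lt {q : ℂ[X]} (hq : q.Monic) {z : ℂ} {δ : ℝ} (hδ : 0 ≤ δ)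
    (h : ‖q.eval z‖ < δ ^ q.natDegree) : ∃ r ∈ q.roots, ‖z - r‖ < δ := by
  lift δ to ℝ≥0 using hδ
  have hsplit := IsAlgClosed.splits q
  by_contra! hfar
  have heval : ‖q.eval z‖₊ = (q.roots.map fun r => ‖z - r‖₊).prod := by
    conv_lhs => rw [hsplit.eq_prod_roots_of_monic hq]
    change (nnnormHom : ℂ →*₀ ℝ≥0) _ = _
    rw [eval_multiset_prod, map_multiset_prod, Multiset.map_map, Multiset.map_map]
    simp [Function.comp_def]
  have hpow : δ ^ q.natDegree ≤ ‖q.eval z‖₊ := by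
    rw [heval, hsplit.natDegree_eq_card_roots, ← Multiset.card_map (fun r => ‖z - r‖₊)]
    exact Multiset.pow_card_le_prod (Multiset.forall_mem_map_iff.2 fun r hr => hfar r hr)
  exact h.not_ge (by exact_mod_cast hpow)

theorem eq_prod_X_sub_C_of_injective {R ι : Type*} [CommRing R] [IsDomain R] [Fintype ι]
    {q : R[X]} (hq : q.Monic) (hdeg : q.natDegree = Fintype.card ι) {μ : ι → R}
    (hμ : Function.Injective μ) (hroot : ∀ i, q.IsRoot (μ i)) :
    q = ∏ i, (X - C (μ i)) := by
  classical
  have hle : Finset.univ.val.map μ ≤ q.roots :=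
    (Multiset.le_iff_subset (Finset.univ.nodup.map hμ)).2 fun r hr => by
      obtain ⟨i, -, rfl⟩ := Multiset.mem_map.1 hr
      exact (mem_roots hq.ne_zero).2 (hroot i)
  have hdvd : ∏ i, (X - C (μ i)) ∣ q := by
    have := (Multiset.prod_dvd_prod_of_le (Multiset.map_le_map (f := fun a => X - C a) hle)).trans
      (prod_multiset_X_sub_C_dvd q)
    rwa [Multiset.map_map] at this
  exact eq_of_monic_of_dvd_of_natDegree_le
    (monic_prod_of_monic _ _ fun i _ => monic_X_sub_C _) hq hdvd (by simp [hdeg])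

end Polynomial

theorem norm_le_specRad_of_isRoot {p : ℕ} {B : Matrix (Fin p) (Fin p) ℝ} {z : ℂ}
    (hz : (B.map Complex.ofReal).charpoly.IsRoot z) : ‖z‖ ≤ specRad B := by
  have hfin : (spectrum ℂ (B.map Complex.ofReal)).Finite :=
    (finite_setOfPred_isRoot (charpoly_monic _).ne_zero).subset fun w hw =>
      mem_spectrum_iff_isRoot_charpoly.1 hw
  exact le_csSup (hfin.image _).bddAbove ⟨z, mem_spectrum_iff_isRoot_charpoly.2 hz, rfl⟩

theorem Matrix.continuous_eval_charpoly_map_ofReal {n : Type*} [Fintype n] [DecidableEq n]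
    (z : ℂ) : Continuous fun B : Matrix n n ℝ => (B.map Complex.ofReal).charpoly.eval z := by
  simp only [eval_charpoly]
  fun_prop

theorem Filter.Tendsto.eventually_norm_eval_charpoly_lt {n α : Type*} [Fintype n]
    [DecidableEq n] {l : Filter α} {A : α → Matrix n n ℝ} {Alim : Matrix n n ℝ}
    (hA : Tendsto A l (𝓝 Alim))
    {z : ℂ} (hz : (Alim.map Complex.ofReal).charpoly.IsRoot z) {ε : ℝ} (hε : 0 < ε) :
    ∀ᶠ a in l, ‖((A a).map Complex.ofReal).charpoly.eval z‖ < ε := by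
  have := ((continuous_eval_charpoly_map_ofReal z).tendsto Alim).comp hA
  rw [hz.eq_zero] at this
  exact this.norm.eventually_lt_const (by simpa using hε)

theorem companion_map_mulVec_succ {p : ℕ} (θ : Fin p → ℝ) (v : Fin p → ℂ) {m : ℕ}
    (hm : m + 1 < p) :
    ((companion p θ).map Complex.ofReal *ᵥ v) ⟨m + 1, hm⟩ = v ⟨m, by omega⟩ := by
  simp only [mulVec, dotProduct, companion, map_apply, of_apply]
  rw [Finset.sum_eq_single ⟨m, by omega⟩ (fun k _ hk => ?_) (by simp)]
  · simp
  · have : m ≠ k := fun h => hk (Fin.ext h.symm)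
    simp [this]

theorem companion_eigenvector_eq {p : ℕ} (θ : Fin p → ℝ) {μ : ℂ} (hμ : μ ≠ 0)
    {v : Fin p → ℂ} (hv : (companion p θ).map Complex.ofReal *ᵥ v = μ • v) (k : Fin p) :
    v k = μ ^ (-(k : ℤ)) * v ⟨0, k.pos⟩ := by
  obtain ⟨m, hm⟩ := k
  induction m with
  | zero => simp
  | succ m ih =>
    have hrow := congrFun hv ⟨m + 1, hm⟩
    rw [companion_map_mulVec_succ, Pi.smul_apply, smul_eq_mul, ih (by omega)] at hrow
    rw [← inv_mul_eq_iff_eq_mul₀ hμ] at hrow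
    rw [← hrow]
    push_cast
    rw [neg_add, zpow_add₀ hμ, _root_.zpow_neg_one]
    ring

theorem companion_map_mulVec_zpow {p : ℕ} (θ : Fin p → ℝ) {μ : ℂ} (hμ : μ ≠ 0)
    (hroot : ((companion p θ).map Complex.ofReal).charpoly.IsRoot μ) :
    (companion p θ).map Complex.ofReal *ᵥ (fun k : Fin p => μ ^ (-(k : ℤ)))
      = μ • fun k : Fin p => μ ^ (-(k : ℤ)) := by
  set M := (companion p θ).map Complex.ofReal
  obtain ⟨v, hv0, hv⟩ := exists_mulVec_eq_zero_iff.2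
    (by rwa [← eval_charpoly] : (scalar (Fin p) μ - M).det = 0)
  have hMv : M *ᵥ v = μ • v := by
    rw [sub_mulVec, sub_eq_zero, scalar_apply] at hv
    ext i
    simp [← hv, mulVec_diagonal]
  ext i
  set v₀ := v ⟨0, i.pos⟩
  have hv_eq : v = v₀ • fun k : Fin p => μ ^ (-(k : ℤ)) := by
    ext k; rw [companion_eigenvector_eq θ hμ hMv k]; simp [v₀, mul_comm]
  have hv₀ : v₀ ≠ 0 := by
    rintro h; exact hv0 (by rw [hv_eq, h, zero_smul])
  have := congrFun hMv i
  rw [hv_eq, mulVec_smul, smul_comm] at this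
  exact smul_right_injective _ hv₀ this

theorem injective_of_le_norm_sub {ι : Type*} {μ : ι → ℂ} {g : ℝ} (hg : 0 < g)
    (hsep : ∀ i j, i ≠ j → g ≤ ‖μ i - μ j‖) : Function.Injective μ := fun i j h => by
  by_contra hij
  exact hg.not_ge (by simpa [h] using hsep i j hij)

theorem continuous_frobC {p q : ℕ} : Continuous (frobC : Matrix (Fin p) (Fin q) ℂ → ℝ) := by
  unfold frobC
  fun_prop

theorem Pmat_eq_transpose_vandermonde {p : ℕ} (μ : Fin p → ℂ) :
    Pmat μ = (vandermonde fun j => (μ j)⁻¹)ᵀ := by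
  ext i j
  simp [Pmat, vandermonde, _root_.zpow_neg, inv_pow]

theorem isUnit_Pmat {p : ℕ} {μ : Fin p → ℂ} (hμ : Function.Injective μ) : IsUnit (Pmat μ) := by
  rw [isUnit_iff_isUnit_det, Pmat_eq_transpose_vandermonde, det_transpose, isUnit_iff_ne_zero,
    Ne, det_vandermonde_eq_zero_iff]
  rintro ⟨_, _, hij, hne⟩
  exact hne (hμ (inv_injective hij))

theorem continuousAt_Pmat {p : ℕ} {μ : Fin p → ℂ} (hμ : ∀ i, μ i ≠ 0) :
    ContinuousAt Pmat μ :=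
  continuousAt_pi.2 fun _ => continuousAt_pi.2 fun j =>
    (continuous_apply j).continuousAt.zpow₀ _ (Or.inl (hμ j))

theorem continuousAt_Pmat_inv {p : ℕ} {μ : Fin p → ℂ} (hμ : ∀ i, μ i ≠ 0)
    (hinj : Function.Injective μ) : ContinuousAt (fun ν => (Pmat ν)⁻¹) μ := by
  refine (continuousAt_matrix_inv _ ?_).comp (continuousAt_Pmat hμ)
  have hdet : (Pmat μ).det ≠ 0 := ((isUnit_iff_isUnit_det _).1 (isUnit_Pmat hinj)).ne_zero
  simpa [Ring.inverse_eq_inv'] using continuousAt_inv₀ hdet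

theorem exists_frobC_Pmat_le {p : ℕ} {c g : ℝ} (hc : 0 < c) (hg : 0 < g) :
    ∃ C, ∀ μ : Fin p → ℂ, (∀ i, c ≤ ‖μ i‖ ∧ ‖μ i‖ ≤ 1) →
      (∀ i j, i ≠ j → g ≤ ‖μ i - μ j‖) → frobC (Pmat μ) ≤ C ∧ frobC (Pmat μ)⁻¹ ≤ C := by
  set K : Set (Fin p → ℂ) :=
    {μ | (∀ i, c ≤ ‖μ i‖ ∧ ‖μ i‖ ≤ 1) ∧ ∀ i j, i ≠ j → g ≤ ‖μ i - μ j‖}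
  have hK : IsCompact K := by
    refine Metric.isCompact_of_isClosed_isBounded ?_ ?_
    · simp only [K, Set.ofPred_and, Set.ofPred_forall]
      refine ((isClosed_iInter fun i => (isClosed_le ?_ ?_).inter (isClosed_le ?_ ?_)).inter
        (isClosed_iInter fun i => isClosed_iInter fun j => isClosed_iInter fun _ =>
          isClosed_le ?_ ?_)) <;> fun_prop
    · refine (Metric.isBounded_closedBall (x := 0) (r := 1)).subset fun μ hμ => ?_
      simpa [pi_norm_le_iff_of_nonneg] using fun i => (hμ.1 i).2
  have hne : ∀ μ ∈ K, ∀ i, μ i ≠ 0 := fun μ hμ i => norm_pos_iff.1 (hc.trans_le (hμ.1 i).1)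
  have hinj : ∀ μ ∈ K, Function.Injective μ := fun μ hμ => injective_of_le_norm_sub hg hμ.2
  obtain ⟨C₁, hC₁⟩ := hK.exists_bound_of_continuousOn (f := fun μ => frobC (Pmat μ))
    fun μ hμ =>
      (continuous_frobC.continuousAt.comp (continuousAt_Pmat (hne μ hμ))).continuousWithinAt
  obtain ⟨C₂, hC₂⟩ := hK.exists_bound_of_continuousOn (f := fun μ => frobC (Pmat μ)⁻¹)
    fun μ hμ => (continuous_frobC.continuousAt.comp
      (continuousAt_Pmat_inv (hne μ hμ) (hinj μ hμ))).continuousWithinAt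
  refine ⟨max C₁ C₂, fun μ hnorm hsep => ⟨?_, ?_⟩⟩
  · exact (le_abs_self _).trans ((hC₁ μ ⟨hnorm, hsep⟩).trans (le_max_left _ _))
  · exact (le_abs_self _).trans ((hC₂ μ ⟨hnorm, hsep⟩).trans (le_max_right _ _))

theorem companion_map_eq_Pmat_mul_diagonal_mul_inv {p : ℕ} (θ : Fin p → ℝ) {μ : Fin p → ℂ}
    (hinj : Function.Injective μ) (hne : ∀ i, μ i ≠ 0)
    (hroot : ∀ i, ((companion p θ).map Complex.ofReal).charpoly.IsRoot (μ i)) :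
    (companion p θ).map Complex.ofReal = Pmat μ * diagonal μ * (Pmat μ)⁻¹ := by
  have hMP : (companion p θ).map Complex.ofReal * Pmat μ = Pmat μ * diagonal μ := by
    ext i j
    rw [mul_diagonal]
    simpa [Pmat, mul_apply, mulVec, dotProduct, mul_comm] using
      congrFun (companion_map_mulVec_zpow θ (hne j) (hroot j)) i
  rw [← hMP, mul_nonsing_inv_cancel_right _ _ ((isUnit_iff_isUnit_det _).1 (isUnit_Pmat hinj))]

theorem exists_pos_two_mul_le_norm_and_three_mul_le_norm_sub {ι : Type*} [Finite ι]
    {lam : ι → ℂ} (hne : ∀ i, lam i ≠ 0) (hinj : Function.Injective lam) :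
    ∃ δ > 0, (∀ i, 2 * δ ≤ ‖lam i‖) ∧ ∀ i j, i ≠ j → 3 * δ ≤ ‖lam i - lam j‖ := by
  have hev : ∀ᶠ δ in 𝓝 (0 : ℝ),
      (∀ i, 2 * δ < ‖lam i‖) ∧ ∀ i j, i ≠ j → 3 * δ < ‖lam i - lam j‖ := by
    refine (eventually_all.2 fun i => ?_).and
      (eventually_all.2 fun i => eventually_all.2 fun j => ?_)
    · exact (continuous_const_mul 2).continuousAt.eventually_lt continuousAt_const
        (by simpa using hne i)
    · by_cases hij : i = j
      · exact .of_forall fun _ h => absurd hij h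
      refine ((continuous_const_mul 3).continuousAt.eventually_lt continuousAt_const ?_).mono
        fun _ h _ => h
      simpa [sub_eq_zero] using hinj.ne hij
  obtain ⟨δ, hδ, hδ0⟩ := ((hev.filter_mono nhdsWithin_le_nhds).and
    (self_mem_nhdsWithin (s := Set.Ioi 0))).exists
  exact ⟨δ, hδ0, fun i => (hδ.1 i).le, fun i j hij => (hδ.2 i j hij).le⟩

theorem Tuple.exists_perm_antitone {n : ℕ} {α : Type*} [LinearOrder α] (f : Fin n → α) :
    ∃ σ : Equiv.Perm (Fin n), Antitone (f ∘ σ) :=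
  ⟨Fin.revPerm.trans (Tuple.sort f), fun _ _ hij => Tuple.monotone_sort f (Fin.rev_le_rev.2 hij)⟩

theorem companion_exists_eigenvalues_near {p : ℕ} (θ : Fin p → ℝ)
    (hρ : specRad (companion p θ) < 1) {lam : Fin p → ℂ} {δ : ℝ} (hδ : 0 < δ)
    (hnorm : ∀ i, 2 * δ ≤ ‖lam i‖) (hsep : ∀ i j, i ≠ j → 3 * δ ≤ ‖lam i - lam j‖)
    (hsmall : ∀ i, ‖((companion p θ).map Complex.ofReal).charpoly.eval (lam i)‖ < δ ^ p) :
    ∃ μ : Fin p → ℂ, Antitone (fun i => ‖μ i‖) ∧ (∀ i, δ ≤ ‖μ i‖ ∧ ‖μ i‖ < 1) ∧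
      (∀ i j, i ≠ j → δ ≤ ‖μ i - μ j‖) ∧
      ∀ i, ((companion p θ).map Complex.ofReal).charpoly.IsRoot (μ i) := by
  obtain ⟨ν, hroot, hν⟩ : ∃ ν : Fin p → ℂ,
      (∀ i, ((companion p θ).map Complex.ofReal).charpoly.IsRoot (ν i)) ∧
        ∀ i, ‖lam i - ν i‖ < δ := by
    choose ν hν using fun i => exists_mem_roots_norm_sub_lt
      (charpoly_monic ((companion p θ).map Complex.ofReal)) hδ.le
      (by rw [charpoly_natDegree_eq_dim, Fintype.card_fin]; exact hsmall i)
    exact ⟨ν, fun i => isRoot_of_mem_roots (hν i).1, fun i => (hν i).2⟩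
  obtain ⟨σ, hσ⟩ := Tuple.exists_perm_antitone fun i => ‖ν i‖
  refine ⟨ν ∘ σ, hσ, fun i => ⟨?_, ?_⟩, fun i j hij => ?_, fun i => hroot _⟩
  · change δ ≤ ‖ν (σ i)‖
    linarith [norm_sub_norm_le (lam (σ i)) (ν (σ i)), hnorm (σ i), hν (σ i)]
  · exact (norm_le_specRad_of_isRoot (hroot _)).trans_lt hρ
  · have htri : ‖lam (σ i) - lam (σ j)‖
        ≤ ‖lam (σ i) - ν (σ i)‖ + ‖ν (σ i) - ν (σ j)‖ + ‖lam (σ j) - ν (σ j)‖ := by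
      rw [show lam (σ i) - lam (σ j)
        = (lam (σ i) - ν (σ i)) + (ν (σ i) - ν (σ j)) - (lam (σ j) - ν (σ j)) by ring]
      exact norm_sub_le_of_le (norm_add_le _ _) le_rfl
    change δ ≤ ‖ν (σ i) - ν (σ j)‖
    linarith [hsep _ _ (σ.injective.ne hij), hν (σ i), hν (σ j)]

theorem companion_diagonalizable_general
    (p : ℕ) (θ : ℕ → Fin p → ℝ)
    (A : ℕ → Matrix (Fin p) (Fin p) ℝ) (hA : ∀ n, A n = companion p (θ n))
    (hρlt : ∀ n, specRad (A n) < 1)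
    (Alim : Matrix (Fin p) (Fin p) ℝ) (lam : Fin p → ℂ)
    -- (H1): convergence of the companion matrix to `A`, whose (distinct, nonzero)
    -- eigenvalues `λ_1, …, λ_p` are ordered by decreasing modulus with `|λ_1| = ρ(A) = 1`,
    -- and whose top-right entry is nonzero
    (hconv : Tendsto A atTop (𝓝 Alim))
    (hchar : (Alim.map Complex.ofReal).charpoly = ∏ i, (X - C (lam i)))
    (hinj : Function.Injective lam)
    (hnz : ∀ i, lam i ≠ 0)
    :
    ∃ n₀ : ℕ, 1 ≤ n₀ ∧ ∃ lamn : ℕ → Fin p → ℂ, ∃ Cb : ℝ, ∀ n, n₀ < n →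
      Function.Injective (lamn n) ∧
      (∀ i j : Fin p, i ≤ j → ‖lamn n j‖ ≤ ‖lamn n i‖) ∧
      (∀ i, 0 < ‖lamn n i‖) ∧
      (∀ i, ‖lamn n i‖ < 1) ∧
      ((A n).map Complex.ofReal).charpoly = (∏ i, (X - C (lamn n i))) ∧
      IsUnit (Pmat (lamn n)) ∧
      (A n).map Complex.ofReal
        = Pmat (lamn n) * Matrix.diagonal (lamn n) * (Pmat (lamn n))⁻¹ ∧
      frobC (Pmat (lamn n)) ≤ Cb ∧ frobC ((Pmat (lamn n))⁻¹) ≤ Cb := by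
  obtain ⟨δ, hδ, hδnorm, hδsep⟩ :=
    exists_pos_two_mul_le_norm_and_three_mul_le_norm_sub hnz hinj
  obtain ⟨Cb, hCb⟩ := exists_frobC_Pmat_le (p := p) hδ hδ
  have hroot : ∀ i, (Alim.map Complex.ofReal).charpoly.IsRoot (lam i) := fun i => by
    rw [hchar, isRoot_prod]
    exact ⟨i, Finset.mem_univ i, root_X_sub_C.2 rfl⟩
  obtain ⟨N, hN⟩ := eventually_atTop.1 <| eventually_all.2 fun i =>
    hconv.eventually_norm_eval_charpoly_lt (hroot i) (pow_pos hδ p)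
  have hμ : ∀ n, ∃ μ : Fin p → ℂ, N ≤ n →
      Antitone (fun i => ‖μ i‖) ∧ (∀ i, δ ≤ ‖μ i‖ ∧ ‖μ i‖ < 1) ∧
      (∀ i j, i ≠ j → δ ≤ ‖μ i - μ j‖) ∧
      ∀ i, ((companion p (θ n)).map Complex.ofReal).charpoly.IsRoot (μ i) := fun n =>
    if hn : N ≤ n then
      (companion_exists_eigenvalues_near (θ n) (hA n ▸ hρlt n) hδ hδnorm hδsep
        (hA n ▸ hN n hn)).imp fun _ h _ => h
    else ⟨0, fun h => absurd h hn⟩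
  choose lamn hlamn using hμ
  refine ⟨N + 1, by omega, lamn, Cb, fun n hn => ?_⟩
  obtain ⟨hanti, hnorm, hsep, hroot⟩ := hlamn n (by omega)
  have hinj := injective_of_le_norm_sub hδ hsep
  rw [hA n]
  exact ⟨hinj, fun _ _ hij => hanti hij, fun i => hδ.trans_le (hnorm i).1, fun i => (hnorm i).2,
    eq_prod_X_sub_C_of_injective (charpoly_monic _) (by simp) hinj hroot, isUnit_Pmat hinj,
    companion_map_eq_Pmat_mul_diagonal_mul_inv (θ n) hinj
      (fun i => norm_pos_iff.1 (hδ.trans_le (hnorm i).1)) hroot,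
    hCb _ (fun i => ⟨(hnorm i).1, (hnorm i).2.le⟩) hsep⟩

/-- Lemma 1. Under (H1), there exists `n₀ ≥ 1` such that for all
`n > n₀`, `A_n` is diagonalizable over `ℂ` as `A_n = P_n D_n P_n⁻¹`, where
`D_n = diag(λ_{n,1},…,λ_{n,p})` contains `p` distinct eigenvalues ordered so that
`1 > |λ_{n,1}| ≥ … ≥ |λ_{n,p}| > 0`, `P_n` has `(i,j)` entry `λ_{n,j}^{-(i-1)}`, and
`‖P_n‖`, `‖P_n⁻¹‖` are bounded by a constant independent of `n`. -/
theorem companion_diagonalizable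
    (p : ℕ) (hp : 0 < p) (θ : ℕ → Fin p → ℝ)
    (A : ℕ → Matrix (Fin p) (Fin p) ℝ) (hA : ∀ n, A n = companion p (θ n))
    (hρlt : ∀ n, specRad (A n) < 1)
    (Alim : Matrix (Fin p) (Fin p) ℝ) (lam : Fin p → ℂ)
    -- (H1): convergence of the companion matrix to `A`, whose (distinct, nonzero)
    -- eigenvalues `λ_1, …, λ_p` are ordered by decreasing modulus with `|λ_1| = ρ(A) = 1`,
    -- and whose top-right entry is nonzero
    (hconv : Tendsto A atTop (𝓝 Alim))
    (hchar : (Alim.map Complex.ofReal).charpoly = ∏ i, (X - C (lam i)))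
    (hinj : Function.Injective lam)
    (hnz : ∀ i, lam i ≠ 0)
    (horder : ∀ i j : Fin p, i ≤ j → ‖lam j‖ ≤ ‖lam i‖)
    (htop : ∀ i : Fin p, (i : ℕ) = 0 → ‖lam i‖ = 1)
    (hrad : specRad Alim = 1)
    (htopright : ∀ i j : Fin p, (i : ℕ) = 0 → (j : ℕ) = p - 1 → Alim i j ≠ 0)
    :
    ∃ n₀ : ℕ, 1 ≤ n₀ ∧ ∃ lamn : ℕ → Fin p → ℂ, ∃ Cb : ℝ, ∀ n, n₀ < n →
      Function.Injective (lamn n) ∧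
      (∀ i j : Fin p, i ≤ j → ‖lamn n j‖ ≤ ‖lamn n i‖) ∧
      (∀ i, 0 < ‖lamn n i‖) ∧
      (∀ i, ‖lamn n i‖ < 1) ∧
      ((A n).map Complex.ofReal).charpoly = (∏ i, (X - C (lamn n i))) ∧
      IsUnit (Pmat (lamn n)) ∧
      (A n).map Complex.ofReal
        = Pmat (lamn n) * Matrix.diagonal (lamn n) * (Pmat (lamn n))⁻¹ ∧
      frobC (Pmat (lamn n)) ≤ Cb ∧ frobC ((Pmat (lamn n))⁻¹) ≤ Cb :=
  companion_diagonalizable_general p θ A hA hρlt Alim lam hconv hchar hinj hnz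
end

section
/- Let λ_1,…,λ_p be p distinct nonzero complex numbers forming the spectrum of a real p×p matrix (so the multiset {λ_1,…,λ_p} is closed under complex conjugation), with λ_1 real. Let P be the p×p complex matrix with (i,j)-entry λ_j^{−(i−1)}. Then P is invertible and every entry of the first row of P^{−1} is a real number. -/
open MeasureTheory ProbabilityTheory Filter Matrix Polynomial
open scoped BigOperators Topology NNReal Kronecker

/-- Lemma 2. If `λ_1,…,λ_p` are distinct nonzero complex numbers whose
multiset is closed under complex conjugation (the spectrum of a real matrix), and `λ_1` is
real, then the Vandermonde-type matrix `P` with `(i,j)` entry `λ_j^{-(i-1)}` is invertible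
and every entry of the first row of `P⁻¹` is real. -/
theorem first_row_of_Pinv_real
    (p : ℕ) (hp : 0 < p) (lam : Fin p → ℂ)
    (hinj : Function.Injective lam)
    (hnz : ∀ i, lam i ≠ 0)
    (hconj : ∀ i, ∃ j, lam j = (starRingEnd ℂ) (lam i))
    (hfirst : ∀ i : Fin p, (i : ℕ) = 0 → (lam i).im = 0) :
    IsUnit (Pmat lam) ∧
      ∀ i j : Fin p, (i : ℕ) = 0 → ((Pmat lam)⁻¹ i j).im = 0 := by
  -- P as transposed Vandermonde
  have hP : Pmat lam = (Matrix.vandermonde fun j => (lam j)⁻¹)ᵀ := by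
    ext i j
    simp only [Pmat, Matrix.of_apply, Matrix.transpose_apply, Matrix.vandermonde]
    rw [_root_.zpow_neg, zpow_natCast, ← inv_pow]
  have hμinj : Function.Injective fun j => (lam j)⁻¹ :=
    fun a b h => hinj (by simpa using congrArg (·⁻¹) h)
  have hdet : (Pmat lam).det ≠ 0 := by
    rw [hP, Matrix.det_transpose]
    exact Matrix.det_vandermonde_ne_zero_iff.mpr hμinj
  have hunit : IsUnit (Pmat lam) :=
    (Matrix.isUnit_iff_isUnit_det _).mpr (isUnit_iff_ne_zero.mpr hdet)
  refine ⟨hunit, ?_⟩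
  -- the conjugation permutation
  choose f hf using hconj
  have hfinj : Function.Injective f := by
    intro a b h
    apply hinj
    have h1 : (starRingEnd ℂ) (lam a) = (starRingEnd ℂ) (lam b) := by
      rw [← hf a, ← hf b, h]
    exact (starRingEnd ℂ).injective h1
  let π : Equiv.Perm (Fin p) := Equiv.ofBijective f (Finite.injective_iff_bijective.mp hfinj)
  have hπ : ∀ j, lam (π j) = (starRingEnd ℂ) (lam j) := hf
  set A := (Pmat lam)⁻¹ with hA
  have hPA : Pmat lam * A = 1 := Matrix.mul_nonsing_inv _ (isUnit_iff_ne_zero.mpr hdet)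
  have hAP : A * Pmat lam = 1 := Matrix.nonsing_inv_mul _ (isUnit_iff_ne_zero.mpr hdet)
  -- conj(P) = P with columns permuted by π
  have hconjP : (Pmat lam).map (starRingEnd ℂ) = (Pmat lam).submatrix id π := by
    ext i j
    simp only [Matrix.map_apply, Matrix.submatrix_apply, Pmat, Matrix.of_apply, id]
    rw [map_zpow₀, hπ]
  have hB : A.submatrix (⇑π) id * ((Pmat lam).map (starRingEnd ℂ)) = 1 := by
    rw [hconjP]
    have : A.submatrix (⇑π) ⇑(Equiv.refl (Fin p)) * (Pmat lam).submatrix (⇑(Equiv.refl (Fin p))) ⇑π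
        = (A * Pmat lam).submatrix (⇑π) ⇑π := Matrix.submatrix_mul_equiv A (Pmat lam) _ _ _
    simpa [hAP, Matrix.submatrix_one_equiv] using this
  have hconjPA : ((Pmat lam).map (starRingEnd ℂ)) * (A.map (starRingEnd ℂ)) = 1 := by
    rw [← Matrix.map_mul, hPA]
    simp
  have hconjA : A.map (starRingEnd ℂ) = A.submatrix (⇑π) id := by
    have h1 : ((Pmat lam).map (starRingEnd ℂ))⁻¹ = A.map (starRingEnd ℂ) :=
      Matrix.inv_eq_right_inv hconjPA
    have h2 : ((Pmat lam).map (starRingEnd ℂ))⁻¹ = A.submatrix (⇑π) id :=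
      Matrix.inv_eq_left_inv hB
    rw [← h1, h2]
  intro i j hi
  have hπi : π i = i := by
    apply hinj
    rw [hπ i, Complex.conj_eq_iff_im.mpr (hfirst i hi)]
  have := congrFun (congrFun hconjA i) j
  simp only [Matrix.map_apply, Matrix.submatrix_apply, id, hπi] at this
  have him : (starRingEnd ℂ) (A i j) = A i j := this
  exact Complex.conj_eq_iff_im.mp him
end
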